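/- arXiv:2305.05107 — 4 statements merged into one kernel-verified Lean document; each statement's English description precedes it below -/
import Mathlib

section
/- Let W̄ be an N×N real matrix (N ≥ 1) with nonnegative entries and zero diagonal, representing the weighted adjacency matrix of a directed graph whose edge relation [i,j] (meaning W̄_{i,j} > 0) is acyclic (no directed cycle). Let D̄ be the diagonal in-degree matrix with D̄_{i,i} = Σ_j W̄_{j,i}, and let L̄ = D̄ − W̄ᵀ be the directed graph Laplacian. Then every complex eigenvalue of L̄ (viewed as a matrix over ℂ) is a real, nonnegative number. -/
/-!
An eigenvector `v` of a matrix whose off-diagonal support is an acyclic relation has, on its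
support, an entry `v i` with no predecessor `j` in the support, so row `i` of `M v = μ v` reads
`M i i * v i = μ * v i` and `μ = M i i`. For the Laplacian of a DAG these diagonal entries are the
in-degrees, which are real and nonnegative.
-/

open Matrix

theorem Finite.wellFounded_of_not_transGen_self {α : Type*} [Finite α] {r : α → α → Prop}
    (h : ∀ a, ¬ Relation.TransGen r a a) : WellFounded r :=
  haveI : Std.Irrefl (Relation.TransGen r) := ⟨h⟩
  Subrelation.wf Relation.TransGen.single (Finite.wellFounded_of_trans_of_irrefl _)

namespace Matrix

theorem exists_diag_eq_of_mulVec_eq_smul {n R : Type*} [Fintype n] [Ring R] [NoZeroDivisors R]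
    {M : Matrix n n R} {r : n → n → Prop} (hr : WellFounded r)
    (hM : ∀ i j, i ≠ j → M i j ≠ 0 → r j i) {v : n → R} (hv : v ≠ 0) {μ : R}
    (hμ : M *ᵥ v = μ • v) : ∃ i, M i i = μ := by
  obtain ⟨i, hvi, hmin⟩ := hr.has_min {i | v i ≠ 0} (Function.ne_iff.mp hv)
  have hrow : (M *ᵥ v) i = M i i * v i := by
    refine Fintype.sum_eq_single i fun j hji => ?_
    by_cases hvj : v j = 0
    · simp [hvj]
    · have : M i j = 0 := not_not.mp fun hMij => hmin j hvj (hM i j (Ne.symm hji) hMij)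
      simp [this]
  refine ⟨i, mul_right_cancel₀ hvi ?_⟩
  rw [← hrow, hμ, Pi.smul_apply, smul_eq_mul]

theorem exists_diag_eq_of_mem_spectrum {n K : Type*} [Fintype n] [DecidableEq n] [Field K]
    {M : Matrix n n K} {r : n → n → Prop} (hr : WellFounded r)
    (hM : ∀ i j, i ≠ j → M i j ≠ 0 → r j i) {μ : K} (hμ : μ ∈ spectrum K M) :
    ∃ i, M i i = μ := by
  rw [← spectrum_toLin', ← Module.End.hasEigenvalue_iff_mem_spectrum] at hμ
  obtain ⟨v, hv⟩ := hμ.exists_hasEigenvector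
  exact exists_diag_eq_of_mulVec_eq_smul hr hM hv.2 (Module.End.mem_eigenspace_iff.mp hv.1)

end Matrix

theorem dag_laplacian_eigenvalues_real_nonneg_general
    (N : ℕ) (W : Matrix (Fin N) (Fin N) ℝ)
    (hnonneg : ∀ i j, 0 ≤ W i j)
    (hacyclic : ∀ i, ¬ Relation.TransGen (fun a b => 0 < W a b) i i)
    (L : Matrix (Fin N) (Fin N) ℝ)
    (hL : L = Matrix.diagonal (fun i => ∑ j, W j i) - Wᵀ) :
    ∀ μ : ℂ, μ ∈ spectrum ℂ (L.map (algebraMap ℝ ℂ)) →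
      ∃ r : ℝ, 0 ≤ r ∧ μ = (r : ℂ) := by
  intro μ hμ
  have hWdiag : ∀ i, W i i = 0 := fun i =>
    le_antisymm (not_lt.mp fun h => hacyclic i (.single h)) (hnonneg i i)
  have hsupport : ∀ i j, i ≠ j → L.map (algebraMap ℝ ℂ) i j ≠ 0 → 0 < W j i := by
    intro i j hij hLij
    refine (hnonneg j i).lt_of_ne' fun hWji => hLij ?_
    simp [hL, hij, hWji]
  obtain ⟨i, rfl⟩ := exists_diag_eq_of_mem_spectrum
    (Finite.wellFounded_of_not_transGen_self hacyclic) hsupport hμ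
  refine ⟨∑ j, W j i, Finset.sum_nonneg fun j _ => hnonneg j i, ?_⟩
  simp [hL, hWdiag]

/-- For the directed graph Laplacian `L̄ = D̄ - W̄ᵀ` of a
directed acyclic graph with nonnegative adjacency matrix `W̄` (zero diagonal,
acyclic positivity relation), every complex eigenvalue of `L̄` is a real,
nonnegative number. -/
theorem dag_laplacian_eigenvalues_real_nonneg
    (N : ℕ) (hN : 1 ≤ N) (W : Matrix (Fin N) (Fin N) ℝ)
    (hnonneg : ∀ i j, 0 ≤ W i j) (hdiag : ∀ i, W i i = 0)
    (hacyclic : ∀ i, ¬ Relation.TransGen (fun a b => 0 < W a b) i i)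
    (L : Matrix (Fin N) (Fin N) ℝ)
    (hL : L = Matrix.diagonal (fun i => ∑ j, W j i) - Wᵀ) :
    ∀ μ : ℂ, μ ∈ spectrum ℂ (L.map (algebraMap ℝ ℂ)) →
      ∃ r : ℝ, 0 ≤ r ∧ μ = (r : ℂ) :=
  dag_laplacian_eigenvalues_real_nonneg_general N W hnonneg hacyclic L hL
end

section
/- Let W̄ be an N×N real matrix with nonnegative entries and zero diagonal whose positivity relation (W̄_{i,j} > 0 meaning a directed edge from i to j) is acyclic, let D̄ be the diagonal matrix with D̄_{i,i} = Σ_j W̄_{j,i}, and let L̄ = D̄ − W̄ᵀ. Then the multiset of eigenvalues of L̄, counted with algebraic multiplicity (i.e., the roots of its characteristic polynomial over ℂ), equals the multiset of weighted in-degrees {D̄_{i,i} : i = 1,…,N}. -/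
/-!
In the Leibniz expansion of `det (X - L)`, a permutation other than the identity moves some
vertex, and following its orbit backwards traces a directed cycle through off-diagonal entries
that would all have to be nonzero, i.e. a cycle of the graph. So only the identity contributes,
the characteristic polynomial is `∏ i, (X - L i i)`, and `L i i` is the in-degree of `i`
because the diagonal of `W` vanishes.
-/

open Matrix Polynomial Relation

theorem Equiv.Perm.transGen_of_apply_ne {α : Type*} [Finite α] {r : α → α → Prop}
    (σ : Equiv.Perm α) (hσ : ∀ k, σ k ≠ k → r (σ k) k) {i : α} (hi : σ i ≠ i) :
    TransGen r i i := by
  have hpow : ∀ m : ℕ, TransGen r ((σ ^ (m + 1)) i) i := by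
    intro m
    induction m with
    | zero => simpa using TransGen.single (hσ i hi)
    | succ m ih =>
      rw [pow_succ', Equiv.Perm.mul_apply]
      exact ih.head (hσ _ ((σ.apply_pow_apply_eq_iff _).not.2 hi))
  simpa [Nat.sub_add_cancel (orderOf_pos σ), pow_orderOf_eq_one] using hpow (orderOf σ - 1)

namespace Matrix

variable {n R : Type*} [Fintype n] [DecidableEq n] [CommRing R] (M : Matrix n n R)

theorem det_eq_prod_diag_of_acyclic
    (hM : ∀ i, ¬ TransGen (fun a b => a ≠ b ∧ M a b ≠ 0) i i) : M.det = ∏ i, M i i := by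
  rw [det_apply, Finset.sum_eq_single 1 (fun σ _ hσ => ?_) (by simp)]
  · simp
  obtain ⟨i, hi⟩ : ∃ i, σ i ≠ i := not_forall.1 fun h => hσ (Equiv.ext h)
  suffices ∃ k, M (σ k) k = 0 by
    obtain ⟨k, hk⟩ := this
    exact smul_eq_zero_of_right _ (Finset.prod_eq_zero (Finset.mem_univ k) hk)
  by_contra! hne
  exact hM i (σ.transGen_of_apply_ne (fun k hk => ⟨hk, hne k⟩) hi)

theorem charpoly_eq_prod_of_acyclic
    (hM : ∀ i, ¬ TransGen (fun a b => a ≠ b ∧ M a b ≠ 0) i i) :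
    M.charpoly = ∏ i, (X - C (M i i)) := by
  rw [charpoly, det_eq_prod_diag_of_acyclic _ ?_]
  · simp only [charmatrix_apply_eq]
  refine fun i hi => hM i <|
    TransGen.mono (fun a b ⟨hab, hne⟩ => ⟨hab, fun h => hne ?_⟩) i i hi
  rw [charmatrix_apply_ne _ _ _ hab, h, C_0, neg_zero]

theorem charpoly_roots_of_acyclic [IsDomain R]
    (hM : ∀ i, ¬ TransGen (fun a b => a ≠ b ∧ M a b ≠ 0) i i) :
    M.charpoly.roots = Finset.univ.val.map (fun i => M i i) := by
  rw [charpoly_eq_prod_of_acyclic M hM, Finset.prod_eq_multiset_prod,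
    ← roots_multiset_prod_X_sub_C (Finset.univ.val.map fun i => M i i), Multiset.map_map]
  rfl

end Matrix

/-- For the directed graph Laplacian `L̄ = D̄ - W̄ᵀ` of a DAG
with nonnegative adjacency matrix `W̄` (zero diagonal, acyclic positivity
relation), the multiset of eigenvalues of `L̄` counted with algebraic
multiplicity (the roots of its characteristic polynomial over `ℂ`) equals the
multiset of weighted in-degrees `{D̄_{i,i}}`. -/
theorem dag_laplacian_eigenvalues_eq_indegrees
    (N : ℕ) (W : Matrix (Fin N) (Fin N) ℝ)
    (hnonneg : ∀ i j, 0 ≤ W i j) (hdiag : ∀ i, W i i = 0)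
    (hacyclic : ∀ i, ¬ Relation.TransGen (fun a b => 0 < W a b) i i)
    (L : Matrix (Fin N) (Fin N) ℝ)
    (hL : L = Matrix.diagonal (fun i => ∑ j, W j i) - Wᵀ) :
    (Matrix.charpoly (L.map (algebraMap ℝ ℂ))).roots
      = Multiset.map (fun i => ((∑ j, W j i : ℝ) : ℂ)) Finset.univ.val := by
  have hL_diag : ∀ i, L i i = ∑ j, W j i := by
    simp [hL, hdiag]
  have hL_off : ∀ a b, a ≠ b → L a b ≠ 0 → 0 < W b a := fun a b hab hne =>
    (hnonneg b a).lt_of_ne' (by simpa [hL, hab] using hne)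
  rw [charpoly_roots_of_acyclic]
  · simp [hL_diag]
  · intro i hi
    apply hacyclic i
    rw [← transGen_swap]
    exact TransGen.mono (fun a b ⟨hab, hne⟩ => hL_off a b hab (by simpa using hne)) i i hi
end

section
/- Let W̄ be the nonnegative adjacency matrix (zero diagonal, acyclic edge relation) of a DAG on N nodes with a lone source node s: node s has no incoming edge (W̄_{j,s} = 0 for all j), and every node i ≠ s is reachable from s by a directed path of edges with positive weight. Let L̄ = D̄ − W̄ᵀ with D̄_{i,i} = Σ_j W̄_{j,i}. Then 0 is an eigenvalue of L̄ with algebraic multiplicity exactly 1, and every other eigenvalue of L̄ (over ℂ) is a strictly positive real number. -/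
/-!
Order the nodes so that every edge decreases a rank: the number of descendants of a node,
made injective by breaking ties with the node itself. In this order `L̄` is triangular, so its
eigenvalues are its diagonal entries, the in-degrees `D̄ᵢᵢ`. The in-degree vanishes at the source
and is positive at every other node, which has an incoming edge on its path from the source.
-/

open Matrix Polynomial Finset Function

theorem Matrix.charpoly_eq_prod_of_blockTriangular_of_injective {R n α : Type*} [CommRing R]
    [Fintype n] [DecidableEq n] [LinearOrder α] {M : Matrix n n R} {b : n → α}
    (hM : M.BlockTriangular b) (hb : Injective b) :
    M.charpoly = ∏ i, (X - C (M i i)) :=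
  letI : LinearOrder n := LinearOrder.lift' b hb
  charpoly_of_isUpperTriangular M fun _ _ h => hM h

namespace Relation

variable {α : Type*} [Fintype α] {r : α → α → Prop}

open Classical in
theorem card_transGen_lt_of_transGen (hr : ∀ a, ¬TransGen r a a) {a b : α}
    (hab : TransGen r a b) :
    #{c | TransGen r b c} < #{c | TransGen r a c} := by
  refine card_lt_card ⟨fun c hc => ?_, fun hsub => hr b ?_⟩
  · simp only [mem_filter, mem_univ, true_and] at hc ⊢
    exact hab.trans hc
  · simpa using hsub (by simpa using hab)

theorem exists_injective_rank_of_acyclic (hr : ∀ a, ¬TransGen r a a) :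
    ∃ f : α → ℕ ×ₗ Fin (Fintype.card α), Injective f ∧ ∀ a b, r a b → f b < f a := by
  classical
  refine ⟨fun a => toLex (#{c | TransGen r a c}, Fintype.equivFin α a), ?_, fun a b hab => ?_⟩
  · intro a b h
    exact (Fintype.equivFin α).injective (Prod.ext_iff.1 (toLex.injective h)).2
  · exact Prod.Lex.toLex_lt_toLex.2 (Or.inl (card_transGen_lt_of_transGen hr (.single hab)))

end Relation

theorem charpoly_diagonal_sub_transpose_of_acyclic {R n : Type*} [CommRing R] [Fintype n]
    [DecidableEq n] (W : Matrix n n R)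
    (hW : ∀ i, ¬Relation.TransGen (fun a b => W a b ≠ 0) i i) :
    (diagonal (fun i => ∑ j, W j i) - Wᵀ).charpoly = ∏ i, (X - C (∑ j, W j i)) := by
  obtain ⟨f, hf_inj, hf_lt⟩ := Relation.exists_injective_rank_of_acyclic hW
  have hdiag : ∀ i, W i i = 0 := fun i => not_not.1 fun h => hW i (.single h)
  have htri : (diagonal (fun i => ∑ j, W j i) - Wᵀ).BlockTriangular f := by
    intro i j hji
    have hij : i ≠ j := by rintro rfl; exact hji.false
    have : W j i = 0 := not_not.1 fun h => (hf_lt j i h).asymm hji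
    simp [diagonal_apply_ne _ hij, this]
  rw [charpoly_eq_prod_of_blockTriangular_of_injective htri hf_inj]
  simp [hdiag]

theorem Matrix.roots_charpoly_map_of_charpoly_eq_prod {K L n : Type*} [Field K] [Field L]
    [Fintype n] [DecidableEq n] (f : K →+* L) {M : Matrix n n K} {d : n → K}
    (hM : M.charpoly = ∏ i, (X - C (d i))) :
    (M.map f).charpoly.roots = univ.val.map fun i => f (d i) := by
  rw [charpoly_map, hM, Polynomial.map_prod,
    ← roots_multiset_prod_X_sub_C (univ.val.map fun i => f (d i)), Multiset.map_map]
  simp only [Polynomial.map_sub, map_X, map_C]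
  rfl

theorem sum_pos_of_reflTransGen_of_ne {R n : Type*} [AddCommMonoid R] [PartialOrder R]
    [IsOrderedAddMonoid R] [Fintype n] {W : Matrix n n R}
    (hW : ∀ i j, 0 ≤ W i j) {s i : n}
    (hsi : Relation.ReflTransGen (fun a b => 0 < W a b) s i) (hne : i ≠ s) :
    0 < ∑ j, W j i := by
  obtain rfl | ⟨c, -, hci⟩ := hsi.cases_tail
  · exact absurd rfl hne
  · exact hci.trans_le (single_le_sum (fun j _ => hW j i) (mem_univ c))

theorem dag_laplacian_zero_simple_others_positive_general
    (N : ℕ) (W : Matrix (Fin N) (Fin N) ℝ)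
    (hnonneg : ∀ i j, 0 ≤ W i j)
    (hacyclic : ∀ i, ¬ Relation.TransGen (fun a b => 0 < W a b) i i)
    (s : Fin N) (hsource : ∀ j, W j s = 0)
    (hreach : ∀ i, i ≠ s → Relation.ReflTransGen (fun a b => 0 < W a b) s i)
    (L : Matrix (Fin N) (Fin N) ℝ)
    (hL : L = Matrix.diagonal (fun i => ∑ j, W j i) - Wᵀ) :
    (Matrix.charpoly (L.map (algebraMap ℝ ℂ))).roots.count 0 = 1 ∧
    ∀ μ ∈ (Matrix.charpoly (L.map (algebraMap ℝ ℂ))).roots,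
      μ ≠ 0 → ∃ r : ℝ, 0 < r ∧ μ = (r : ℂ) := by
  have hpos_iff : (fun a b => W a b ≠ 0) = (fun a b => 0 < W a b) := by
    ext a b; exact (hnonneg a b).lt_iff_ne'.symm
  have hroots := roots_charpoly_map_of_charpoly_eq_prod (algebraMap ℝ ℂ)
    (hL ▸ charpoly_diagonal_sub_transpose_of_acyclic W (hpos_iff ▸ hacyclic))
  have hzero_iff : ∀ i, ∑ j, W j i = 0 ↔ i = s := fun i =>
    ⟨fun h => by_contra fun hi => (sum_pos_of_reflTransGen_of_ne hnonneg (hreach i hi) hi).ne' h,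
      fun h => h ▸ by simp [hsource]⟩
  rw [hroots]
  refine ⟨?_, fun μ hμ hμ0 => ?_⟩
  · rw [Multiset.count_map, ← filter_val, ← card_def, card_eq_one]
    refine ⟨s, ext fun i => ?_⟩
    simp only [mem_filter, mem_univ, true_and, mem_singleton, eq_comm (a := (0 : ℂ)),
      map_eq_zero, hzero_iff]
  · obtain ⟨i, -, rfl⟩ := Multiset.mem_map.1 hμ
    have hi : i ≠ s := by rintro rfl; simp [hsource] at hμ0
    exact ⟨_, sum_pos_of_reflTransGen_of_ne hnonneg (hreach i hi) hi, rfl⟩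

/-- For the directed graph Laplacian `L̄ = D̄ - W̄ᵀ` of a DAG
with a lone source node `s` (no incoming edges at `s`, every other node
reachable from `s` via a directed path of positive-weight edges), `0` is an
eigenvalue of `L̄` with algebraic multiplicity exactly `1`, and every other
eigenvalue of `L̄` over `ℂ` is a strictly positive real number. -/
theorem dag_laplacian_zero_simple_others_positive
    (N : ℕ) (W : Matrix (Fin N) (Fin N) ℝ)
    (hnonneg : ∀ i j, 0 ≤ W i j) (hdiag : ∀ i, W i i = 0)
    (hacyclic : ∀ i, ¬ Relation.TransGen (fun a b => 0 < W a b) i i)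
    (s : Fin N) (hsource : ∀ j, W j s = 0)
    (hreach : ∀ i, i ≠ s → Relation.ReflTransGen (fun a b => 0 < W a b) s i)
    (L : Matrix (Fin N) (Fin N) ℝ)
    (hL : L = Matrix.diagonal (fun i => ∑ j, W j i) - Wᵀ) :
    (Matrix.charpoly (L.map (algebraMap ℝ ℂ))).roots.count 0 = 1 ∧
    ∀ μ ∈ (Matrix.charpoly (L.map (algebraMap ℝ ℂ))).roots,
      μ ≠ 0 → ∃ r : ℝ, 0 < r ∧ μ = (r : ℂ) :=
  dag_laplacian_zero_simple_others_positive_general N W hnonneg hacyclic s hsource hreach L hL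
end

section
/- Let L and Q be real symmetric N×N matrices such that: (i) L_{i,j} ≤ 0 and Q_{i,j} ≤ 0 for all i ≠ j; (ii) for every i ≠ j, not both L_{i,j} and Q_{i,j} are nonzero; (iii) L has zero row sums, i.e., L_{i,i} = −Σ_{j≠i} L_{i,j} for all i; and (iv) Q_{i,i} − Σ_{j≠i} Q_{i,j} > 0 for all i. Let ε ≥ 0 and set μ = min_i ε / (Q_{i,i} − Σ_{j≠i} Q_{i,j}). Then for A = L − μQ + εI, every Gershgorin disc left-end is nonnegative: A_{i,i} − Σ_{j≠i} |A_{i,j}| ≥ 0 for all i. Consequently A is positive semi-definite. -/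
open Matrix Finset

/-!
Gershgorin's circle theorem places every eigenvalue of a Hermitian matrix at distance at most
`∑_{j≠k} ‖A k j‖` from some diagonal entry `A k k`; if these radii never exceed the (real) diagonal
entries, all eigenvalues are nonnegative and the matrix is positive semidefinite.

For `A = L - μQ + εI`, the disjointness of the off-diagonal supports of `L` and `Q` means that the
off-diagonal entries `L i j - μ Q i j` suffer no cancellation, so the left-end of row `i` is
`(L i i + ∑_{j≠i} L i j) + ε - μ (Q i i - ∑_{j≠i} Q i j)`. The first term vanishes since `L` has zero
row sums, and the choice of `μ` as a minimum gives `μ (Q i i - ∑_{j≠i} Q i j) ≤ ε`.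
-/

namespace Matrix

open scoped ComplexOrder

variable {n : Type*} [Fintype n] [DecidableEq n]

theorem IsHermitian.posSemidef_of_sum_norm_offDiag_le_re_diag {𝕜 : Type*} [RCLike 𝕜]
    {A : Matrix n n 𝕜} (hA : A.IsHermitian)
    (h : ∀ i, ∑ j ∈ univ.erase i, ‖A i j‖ ≤ RCLike.re (A i i)) : A.PosSemidef := by
  refine hA.posSemidef_iff_eigenvalues_nonneg.mpr fun i => ?_
  have hev : Module.End.HasEigenvalue (toLin' A) (hA.eigenvalues i : 𝕜) := by
    rw [Module.End.hasEigenvalue_iff_mem_spectrum, spectrum_toLin']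
    exact spectrum.algebraMap_mem 𝕜 (hA.eigenvalues_mem_spectrum_real i)
  obtain ⟨k, hk⟩ := eigenvalue_mem_ball hev
  rw [mem_closedBall_iff_norm] at hk
  have hre : RCLike.re (A k k) - hA.eigenvalues i ≤ ‖(hA.eigenvalues i : 𝕜) - A k k‖ := by
    rw [norm_sub_rev]
    simpa using RCLike.re_le_norm (A k k - hA.eigenvalues i)
  show 0 ≤ hA.eigenvalues i
  linarith [h k]

theorem diag_sub_sum_abs_offDiag_sub_smul_add_smul_one {L Q : Matrix n n ℝ}
    (hLoff : ∀ i j, i ≠ j → L i j ≤ 0) (hQoff : ∀ i j, i ≠ j → Q i j ≤ 0)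
    (hdisj : ∀ i j, i ≠ j → L i j = 0 ∨ Q i j = 0) {μ : ℝ} (hμ : 0 ≤ μ) (ε : ℝ) (i : n) :
    (L - μ • Q + ε • 1) i i - ∑ j ∈ univ.erase i, |(L - μ • Q + ε • 1) i j| =
      (L i i + ∑ j ∈ univ.erase i, L i j) + ε - μ * (Q i i - ∑ j ∈ univ.erase i, Q i j) := by
  have hoff : ∀ j ∈ univ.erase i, |(L - μ • Q + ε • 1) i j| = -L i j - μ * Q i j := by
    intro j hj
    have hij : i ≠ j := (ne_of_mem_erase hj).symm
    simp only [add_apply, sub_apply, smul_apply, one_apply_ne hij, smul_eq_mul, mul_zero, add_zero]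
    rcases hdisj i j hij with hL | hQ
    · rw [hL, zero_sub, abs_neg, abs_of_nonpos (mul_nonpos_of_nonneg_of_nonpos hμ (hQoff i j hij)),
        neg_zero, zero_sub]
    · rw [hQ, mul_zero, sub_zero, sub_zero, abs_of_nonpos (hLoff i j hij)]
  rw [sum_congr rfl hoff, sum_sub_distrib, sum_neg_distrib, ← mul_sum]
  simp only [add_apply, sub_apply, smul_apply, one_apply_eq, smul_eq_mul, mul_one]
  ring

end Matrix

/-- Let `L` and `Q` be real symmetric matrices with
nonpositive off-diagonal entries that are never simultaneously nonzero
off-diagonal, `L` having zero row sums, and `Q_{i,i} - ∑_{j≠i} Q_{i,j} > 0`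
for every row `i`.  For `ε ≥ 0` and `μ = min_i ε / (Q_{i,i} - ∑_{j≠i} Q_{i,j})`,
the matrix `A = L - μQ + εI` has all Gershgorin disc left-ends nonnegative,
and consequently `A` is positive semi-definite. -/
theorem gershgorin_leftends_nonneg_and_psd
    (N : ℕ) (hN : 0 < N) (L Q : Matrix (Fin N) (Fin N) ℝ)
    (hLsymm : L.IsSymm) (hQsymm : Q.IsSymm)
    (hLoff : ∀ i j, i ≠ j → L i j ≤ 0)
    (hQoff : ∀ i j, i ≠ j → Q i j ≤ 0)
    (hdisj : ∀ i j, i ≠ j → L i j = 0 ∨ Q i j = 0)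
    (hLrow : ∀ i, L i i = -∑ j ∈ Finset.univ.erase i, L i j)
    (hQpos : ∀ i, 0 < Q i i - ∑ j ∈ Finset.univ.erase i, Q i j)
    (ε : ℝ) (hε : 0 ≤ ε)
    (μ : ℝ)
    (hμ : μ = Finset.univ.inf' ⟨⟨0, hN⟩, Finset.mem_univ _⟩
        (fun i => ε / (Q i i - ∑ j ∈ Finset.univ.erase i, Q i j)))
    (A : Matrix (Fin N) (Fin N) ℝ)
    (hA : A = L - μ • Q + ε • (1 : Matrix (Fin N) (Fin N) ℝ)) :
    (∀ i, 0 ≤ A i i - ∑ j ∈ Finset.univ.erase i, |A i j|) ∧ A.PosSemidef := by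
  have hμ_nonneg : 0 ≤ μ := hμ ▸ le_inf' _ _ fun i _ => div_nonneg hε (hQpos i).le
  have hμ_le : ∀ i, μ * (Q i i - ∑ j ∈ univ.erase i, Q i j) ≤ ε := fun i =>
    (le_div_iff₀ (hQpos i)).mp (hμ ▸ inf'_le _ (mem_univ i))
  have hleft : ∀ i, 0 ≤ A i i - ∑ j ∈ univ.erase i, |A i j| := fun i => by
    rw [hA, diag_sub_sum_abs_offDiag_sub_smul_add_smul_one hLoff hQoff hdisj hμ_nonneg, hLrow i]
    linarith [hμ_le i]
  have hA_symm : A.IsSymm := hA ▸ (hLsymm.sub (hQsymm.smul μ)).add (isSymm_one.smul ε)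
  refine ⟨hleft, (isHermitian_iff_isSymm.mpr hA_symm).posSemidef_of_sum_norm_offDiag_le_re_diag
    fun i => ?_⟩
  simpa [sub_nonneg] using hleft i
end
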